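/- For every n ≥ 1 and every prime p, there exists a brick B ⊆ H_n with |B| ≥ (√p / (4·(2n)ⁿ)) · |H_n|^(1/2) such that B·B contains no coset of any nontrivial subgroup of H_n. -/

import Mathlib

open scoped Pointwise

def Heis (p n : ℕ) : Type := (Fin n → ZMod p) × (Fin n → ZMod p) × ZMod p

namespace Heis

variable {p n : ℕ}

instance : Mul (Heis p n) :=
  ⟨fun a b => (a.1 + b.1, a.2.1 + b.2.1, (∑ i, a.1 i * b.2.1 i) + a.2.2 + b.2.2)⟩
instance : One (Heis p n) := ⟨((0 : Fin n → ZMod p), (0 : Fin n → ZMod p), (0 : ZMod p))⟩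
instance : Inv (Heis p n) :=
  ⟨fun a => (-a.1, -a.2.1, (∑ i, a.1 i * a.2.1 i) - a.2.2)⟩

lemma one_def : (1 : Heis p n) = ((0 : Fin n → ZMod p), (0 : Fin n → ZMod p), (0 : ZMod p)) := rfl

lemma inv_def (a : Heis p n) :
    a⁻¹ = (-a.1, -a.2.1, (∑ i, a.1 i * a.2.1 i) - a.2.2) := rfl

lemma mul_def (a b : Heis p n) :
    a * b = (a.1 + b.1, a.2.1 + b.2.1, (∑ i, a.1 i * b.2.1 i) + a.2.2 + b.2.2) := rfl

instance : Group (Heis p n) :=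
  Group.ofLeftAxioms
    (fun a b c => by
      rw [mul_def, mul_def, mul_def, mul_def]
      refine Prod.ext ?_ (Prod.ext ?_ ?_) <;>
        simp [mul_def, Finset.sum_add_distrib, add_mul, mul_add] <;> ring)
    (fun a => by
      rw [mul_def, one_def]
      refine Prod.ext ?_ (Prod.ext ?_ ?_) <;>
        simp [mul_def, one_def])
    (fun a => by
      rw [mul_def, one_def, inv_def]
      refine Prod.ext ?_ (Prod.ext ?_ ?_) <;>
        simp [mul_def, one_def, inv_def, Finset.sum_add_distrib, neg_mul, mul_comm] <;> ring)

instance [NeZero p] : Fintype (Heis p n) :=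
  inferInstanceAs (Fintype ((Fin n → ZMod p) × (Fin n → ZMod p) × ZMod p))

instance : DecidableEq (Heis p n) :=
  inferInstanceAs (DecidableEq ((Fin n → ZMod p) × (Fin n → ZMod p) × ZMod p))

end Heis

/-!
For `s, w < p` let `B` be the box `[0, s]ⁿ × [0, s]ⁿ × [0, w]` of residues. Reading residues as
natural numbers, the coordinates of a product of two elements of `B` are at most `2s` (outside
the centre) and `n s² + 2w` (centre), so if both are below `p - 1` no element of `B·B` has a
coordinate equal to `-1`. On the other hand, for `a ≠ 1` one coordinate of `g aᵏ` is an affine,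
nonconstant function of `k` (a coordinate where `a` is nonzero, or the centre if `a` is central),
so it takes every value in `𝔽_p`: every coset of a nontrivial subgroup leaves `B·B`.
Taking `s` maximal with `2n s² < p` and `w` as large as allowed gives the size bound. For
`p = 3`, `n = 1` every admissible box has a single element, and an explicit brick of size 2 is
checked by computation.
-/

lemma ZMod.exists_add_nsmul_eq {p : ℕ} [Fact p.Prime] {c : ZMod p} (hc : c ≠ 0) (a t : ZMod p) :
    ∃ k : ℕ, a + k • c = t :=
  ⟨((t - a) / c).val, by
    rw [nsmul_eq_mul, ZMod.natCast_zmod_val, div_mul_cancel₀ _ hc, add_sub_cancel]⟩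

lemma ZMod.val_sum_le {p : ℕ} {ι : Type*} (s : Finset ι) (f : ι → ZMod p) :
    (∑ i ∈ s, f i).val ≤ ∑ i ∈ s, (f i).val :=
  Finset.le_sum_of_subadditive _ ZMod.val_zero.le ZMod.val_add_le s f

def ZMod.castIic (p s : ℕ) : Finset (ZMod p) := (Finset.Iic s).image Nat.cast

lemma ZMod.val_le_of_mem_castIic {p s : ℕ} {a : ZMod p} (ha : a ∈ ZMod.castIic p s) :
    a.val ≤ s := by
  obtain ⟨r, hr, rfl⟩ := Finset.mem_image.1 ha
  rw [ZMod.val_natCast]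
  exact (Nat.mod_le r p).trans (Finset.mem_Iic.1 hr)

lemma ZMod.card_castIic {p s : ℕ} (hs : s < p) : (ZMod.castIic p s).card = s + 1 := by
  rw [ZMod.castIic, Finset.card_image_of_injOn, Nat.card_Iic]
  intro a ha b hb hab
  have hap : a < p := (Finset.mem_Iic.1 ha).trans_lt hs
  have hbp : b < p := (Finset.mem_Iic.1 hb).trans_lt hs
  simpa [ZMod.val_natCast, Nat.mod_eq_of_lt hap, Nat.mod_eq_of_lt hbp] using congrArg ZMod.val hab

namespace Heis

variable {p n : ℕ}

lemma pow_fst (a : Heis p n) (k : ℕ) : (a ^ k).1 = k • a.1 := by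
  induction k with
  | zero => simp [one_def]
  | succ k ih => rw [pow_succ, mul_def, ih, succ_nsmul]

lemma pow_snd_fst (a : Heis p n) (k : ℕ) : (a ^ k).2.1 = k • a.2.1 := by
  induction k with
  | zero => simp [one_def]
  | succ k ih => rw [pow_succ, mul_def, ih, succ_nsmul]

lemma pow_snd_snd_of_snd_fst_eq_zero {a : Heis p n} (ha : a.2.1 = 0) (k : ℕ) :
    (a ^ k).2.2 = k • a.2.2 := by
  induction k with
  | zero => simp [one_def]
  | succ k ih => simp [pow_succ, mul_def, ih, ha, add_one_mul]

theorem exists_coord_mul_pow_eq [Fact p.Prime] {a : Heis p n} (ha : a ≠ 1) (g : Heis p n)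
    (t : ZMod p) : ∃ k : ℕ,
      (∃ i, (g * a ^ k).1 i = t) ∨ (∃ i, (g * a ^ k).2.1 i = t) ∨ (g * a ^ k).2.2 = t := by
  by_cases hx : ∃ i, a.1 i ≠ 0
  · obtain ⟨i, hi⟩ := hx
    obtain ⟨k, hk⟩ := ZMod.exists_add_nsmul_eq hi (g.1 i) t
    exact ⟨k, .inl ⟨i, by simpa [mul_def, pow_fst] using hk⟩⟩
  by_cases hy : ∃ i, a.2.1 i ≠ 0
  · obtain ⟨i, hi⟩ := hy
    obtain ⟨k, hk⟩ := ZMod.exists_add_nsmul_eq hi (g.2.1 i) t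
    exact ⟨k, .inr (.inl ⟨i, by simpa [mul_def, pow_snd_fst] using hk⟩)⟩
  push Not at hx hy
  have hx : a.1 = 0 := funext hx
  have hy : a.2.1 = 0 := funext hy
  have hz : a.2.2 ≠ 0 := fun hz => ha (Prod.ext hx (Prod.ext hy hz))
  obtain ⟨k, hk⟩ := ZMod.exists_add_nsmul_eq hz g.2.2 t
  refine ⟨k, .inr (.inr ?_)⟩
  simpa [mul_def, pow_snd_fst, pow_snd_snd_of_snd_fst_eq_zero hy, hy] using hk

def CosetFree (S : Finset (Heis p n)) : Prop :=
  ∀ G : Subgroup (Heis p n), G ≠ ⊥ → ∀ g : Heis p n, ∃ h ∈ G, g * h ∉ S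

lemma cosetFree_of_forall_ne_one {S : Finset (Heis p n)}
    (hS : ∀ a : Heis p n, a ≠ 1 → ∀ g, ∃ k : ℕ, g * a ^ k ∉ S) : CosetFree S := by
  intro G hG g
  obtain ⟨a, haG, ha⟩ := G.bot_or_exists_ne_one.resolve_left hG
  obtain ⟨k, hk⟩ := hS a ha g
  exact ⟨a ^ k, pow_mem haG k, hk⟩

theorem cosetFree_of_forall_coord_ne [Fact p.Prime] {S : Finset (Heis p n)} (t : ZMod p)
    (hS : ∀ u ∈ S, (∀ i, u.1 i ≠ t) ∧ (∀ i, u.2.1 i ≠ t) ∧ u.2.2 ≠ t) : CosetFree S := by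
  refine cosetFree_of_forall_ne_one fun a ha g => ?_
  obtain ⟨k, hk⟩ := exists_coord_mul_pow_eq ha g t
  refine ⟨k, fun hmem => ?_⟩
  obtain ⟨hx, hy, hz⟩ := hS _ hmem
  rcases hk with ⟨i, hi⟩ | ⟨i, hi⟩ | hi
  exacts [hx i hi, hy i hi, hz hi]

def brick (X Y : Fin n → Finset (ZMod p)) (Z : Finset (ZMod p)) : Finset (Heis p n) :=
  (Fintype.piFinset X ×ˢ Fintype.piFinset Y ×ˢ Z :
    Finset ((Fin n → ZMod p) × (Fin n → ZMod p) × ZMod p))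

lemma mem_brick {X Y : Fin n → Finset (ZMod p)} {Z : Finset (ZMod p)} {g : Heis p n} :
    g ∈ brick X Y Z ↔ (∀ i, g.1 i ∈ X i) ∧ (∀ i, g.2.1 i ∈ Y i) ∧ g.2.2 ∈ Z :=
  Finset.mem_product.trans <| and_congr Fintype.mem_piFinset <|
    Finset.mem_product.trans <| and_congr_left' Fintype.mem_piFinset

lemma card_brick (X Y : Fin n → Finset (ZMod p)) (Z : Finset (ZMod p)) :
    (brick X Y Z).card = (∏ i, (X i).card) * ((∏ i, (Y i).card) * Z.card) := by
  show (Fintype.piFinset X ×ˢ Fintype.piFinset Y ×ˢ Z).card = _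
  rw [Finset.card_product, Finset.card_product, Fintype.card_piFinset, Fintype.card_piFinset]

def intervalBrick (p n s w : ℕ) : Finset (Heis p n) :=
  brick (fun _ => ZMod.castIic p s) (fun _ => ZMod.castIic p s) (ZMod.castIic p w)

lemma card_intervalBrick {s w : ℕ} (hs : s < p) (hw : w < p) :
    (intervalBrick p n s w).card = (s + 1) ^ n * ((s + 1) ^ n * (w + 1)) := by
  simp [intervalBrick, card_brick, ZMod.card_castIic hs, ZMod.card_castIic hw]

lemma val_coords_le_of_mem_intervalBrick {s w : ℕ} {a : Heis p n}
    (ha : a ∈ intervalBrick p n s w) :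
    (∀ i, (a.1 i).val ≤ s) ∧ (∀ i, (a.2.1 i).val ≤ s) ∧ a.2.2.val ≤ w := by
  obtain ⟨hx, hy, hz⟩ := mem_brick.1 ha
  exact ⟨fun i => ZMod.val_le_of_mem_castIic (hx i), fun i => ZMod.val_le_of_mem_castIic (hy i),
    ZMod.val_le_of_mem_castIic hz⟩

lemma val_coords_le_of_mem_mul_intervalBrick {s w : ℕ} {u : Heis p n}
    (hu : u ∈ intervalBrick p n s w * intervalBrick p n s w) :
    (∀ i, (u.1 i).val ≤ 2 * s) ∧ (∀ i, (u.2.1 i).val ≤ 2 * s) ∧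
      u.2.2.val ≤ n * s ^ 2 + 2 * w := by
  obtain ⟨a, ha, b, hb, rfl⟩ := Finset.mem_mul.1 hu
  obtain ⟨hax, hay, haz⟩ := val_coords_le_of_mem_intervalBrick ha
  obtain ⟨hbx, hby, hbz⟩ := val_coords_le_of_mem_intervalBrick hb
  refine ⟨fun i => ?_, fun i => ?_, ?_⟩
  · exact (ZMod.val_add_le _ _).trans (two_mul s ▸ Nat.add_le_add (hax i) (hbx i))
  · exact (ZMod.val_add_le _ _).trans (two_mul s ▸ Nat.add_le_add (hay i) (hby i))
  have hsum : (∑ i, a.1 i * b.2.1 i).val ≤ n * s ^ 2 :=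
    calc (∑ i, a.1 i * b.2.1 i).val ≤ ∑ i, (a.1 i).val * (b.2.1 i).val :=
          (ZMod.val_sum_le _ _).trans (Finset.sum_le_sum fun i _ => ZMod.val_mul_le _ _)
      _ ≤ ∑ _i : Fin n, s * s := Finset.sum_le_sum fun i _ => Nat.mul_le_mul (hax i) (hby i)
      _ = n * s ^ 2 := by simp [sq]
  calc (a * b).2.2.val
      ≤ (∑ i, a.1 i * b.2.1 i).val + a.2.2.val + b.2.2.val :=
        (ZMod.val_add_le _ _).trans (Nat.add_le_add_right (ZMod.val_add_le _ _) _)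
    _ ≤ n * s ^ 2 + 2 * w := by omega

theorem cosetFree_mul_intervalBrick [Fact p.Prime] {s w : ℕ} (hs : 2 * s + 1 < p)
    (hw : n * s ^ 2 + 2 * w + 1 < p) :
    CosetFree (intervalBrick p n s w * intervalBrick p n s w) := by
  have hval : (-1 : ZMod p).val = p - 1 := by
    rw [ZMod.neg_val, if_neg one_ne_zero, ZMod.val_one]
  refine cosetFree_of_forall_coord_ne (-1) fun u hu => ?_
  obtain ⟨hx, hy, hz⟩ := val_coords_le_of_mem_mul_intervalBrick hu
  refine ⟨fun i h => ?_, fun i h => ?_, fun h => ?_⟩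
  · have := hx i; rw [h, hval] at this; omega
  · have := hy i; rw [h, hval] at this; omega
  · rw [h, hval] at hz; omega

def smallBrick : Finset (Heis 3 1) := brick (fun _ => {1}) (fun _ => {0, 1}) {0}

lemma cosetFree_mul_smallBrick : CosetFree (smallBrick * smallBrick) :=
  cosetFree_of_forall_ne_one fun a ha g =>
    ((by decide : ∀ a : Heis 3 1, a ≠ 1 → ∀ g : Heis 3 1,
      ∃ k < 3, g * a ^ k ∉ smallBrick * smallBrick) a ha g).imp fun _ => And.right

end Heis

lemma sqrt_div_mul_rpow_half_le {p n c : ℕ} (h : p ^ (n + 1) ≤ 4 * (2 * n) ^ n * c) :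
    √p / (4 * (2 * (n : ℝ)) ^ n) * ((p : ℝ) ^ (2 * n + 1)) ^ ((1 : ℝ) / 2) ≤ c := by
  have hp : √p * ((p : ℝ) ^ (2 * n + 1)) ^ ((1 : ℝ) / 2) = (p : ℝ) ^ (n + 1) := by
    rw [← Real.sqrt_eq_rpow, ← Real.sqrt_mul (Nat.cast_nonneg p), ← pow_succ',
      show 2 * n + 1 + 1 = (n + 1) * 2 by ring, pow_mul, Real.sqrt_sq (by positivity)]
  rw [div_mul_eq_mul_div, hp]
  refine div_le_of_le_mul₀ (by positivity) c.cast_nonneg ?_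
  rw [mul_comm]
  exact_mod_cast h

lemma pow_succ_le_add_two_pow_mul_sub_one {p n : ℕ} (hp : 2 ≤ p) (hn : 1 ≤ n) :
    p ^ (n + 1) ≤ (p + 2) ^ n * (p - 1) := by
  obtain ⟨m, rfl⟩ := Nat.exists_eq_add_of_le' hn
  obtain ⟨q, rfl⟩ := Nat.exists_eq_add_of_le' hp
  calc (q + 2) ^ (m + 1 + 1) = (q + 2) ^ m * ((q + 2) * (q + 2)) := by ring
    _ ≤ (q + 2 + 2) ^ m * ((q + 2 + 2) * (q + 1)) :=
        Nat.mul_le_mul (Nat.pow_le_pow_left (by omega) m) (by nlinarith)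
    _ = (q + 2 + 2) ^ (m + 1) * (q + 2 - 1) := by rw [show q + 2 - 1 = q + 1 by omega]; ring

lemma Nat.exists_mul_sq_lt_le {m p : ℕ} (hm : 0 < m) (hp : 0 < p) :
    ∃ s, m * s ^ 2 < p ∧ p ≤ m * (s + 1) ^ 2 := by
  refine ⟨Nat.sqrt ((p - 1) / m), ?_, ?_⟩
  · calc m * Nat.sqrt ((p - 1) / m) ^ 2 ≤ m * ((p - 1) / m) := Nat.mul_le_mul_left _ (Nat.sqrt_le' _)
      _ ≤ p - 1 := Nat.mul_div_le _ _
      _ < p := by omega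
  · calc p ≤ m * ((p - 1) / m + 1) := by have := Nat.lt_mul_div_succ (p - 1) hm; omega
      _ ≤ m * (Nat.sqrt ((p - 1) / m) + 1) ^ 2 := Nat.mul_le_mul_left _ (Nat.lt_succ_sqrt' _)

lemma exists_intervalBrick_params {p n : ℕ} (hp : 2 ≤ p) (hpn : ¬(p = 3 ∧ n = 1)) :
    ∃ s w : ℕ, 2 * s + 1 < p ∧ n * s ^ 2 + 2 * w + 1 < p ∧
      p ^ (n + 1) ≤ 4 * (2 * n) ^ n * ((s + 1) ^ n * ((s + 1) ^ n * (w + 1))) := by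
  rcases Nat.eq_zero_or_pos n with rfl | hn
  · exact ⟨0, (p - 2) / 2, by omega, by omega, by simp only [zero_add, pow_one, pow_zero, one_mul, mul_one]; omega⟩
  obtain ⟨s, hs, hs'⟩ := Nat.exists_mul_sq_lt_le (by omega : 0 < 2 * n) (by omega : 0 < p)
  rw [mul_assoc] at hs
  refine ⟨s, (p - 2 - n * s ^ 2) / 2, ?_, by omega, ?_⟩
  · rcases Nat.lt_or_ge s 2 with hs2 | hs2
    · interval_cases s <;> omega
    · have : s ^ 2 ≤ n * s ^ 2 := Nat.le_mul_of_pos_left _ hn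
      have : s < s ^ 2 := by nlinarith
      omega
  set w := (p - 2 - n * s ^ 2) / 2
  rw [show 4 * (2 * n) ^ n * ((s + 1) ^ n * ((s + 1) ^ n * (w + 1)))
      = (2 * n * (s + 1) ^ 2) ^ n * (4 * (w + 1)) by
    rw [mul_pow (2 * n) ((s + 1) ^ 2), ← pow_mul]; ring]
  rcases Nat.lt_or_ge (2 * (n * s ^ 2)) (p - 1) with hgap | htight
  · calc p ^ (n + 1) = p ^ n * p := pow_succ p n
      _ ≤ (2 * n * (s + 1) ^ 2) ^ n * (4 * (w + 1)) :=
        Nat.mul_le_mul (Nat.pow_le_pow_left hs' n) (by omega)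
  -- Here `2 n s² = p - 1` only leaves `4 (w + 1) ≥ p - 1`, but then `2 n (s + 1)² ≥ p + 2`.
  have hs1 : 1 ≤ s := Nat.pos_of_ne_zero fun h0 => by subst h0; omega
  have hbig : p + 2 ≤ 2 * n * (s + 1) ^ 2 := by
    have : 3 ≤ n * (2 * s + 1) := by nlinarith
    have : 2 * n * (s + 1) ^ 2 = 2 * (n * s ^ 2) + 2 * (n * (2 * s + 1)) := by ring
    omega
  calc p ^ (n + 1) ≤ (p + 2) ^ n * (p - 1) := pow_succ_le_add_two_pow_mul_sub_one hp hn
    _ ≤ (2 * n * (s + 1) ^ 2) ^ n * (4 * (w + 1)) :=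
      Nat.mul_le_mul (Nat.pow_le_pow_left hbig n) (by omega)

theorem stmt15_general (n : ℕ) (p : ℕ) [Fact p.Prime] :
    ∃ (X Y : Fin n → Finset (ZMod p)) (Z : Finset (ZMod p)) (B : Finset (Heis p n)),
      (∀ g : Heis p n, g ∈ B ↔
        ((∀ i, g.1 i ∈ X i) ∧ (∀ i, g.2.1 i ∈ Y i) ∧ g.2.2 ∈ Z)) ∧
      Real.sqrt p / (4 * (2 * (n : ℝ)) ^ n) * ((p : ℝ) ^ (2 * n + 1)) ^ ((1 : ℝ) / 2)
        ≤ (B.card : ℝ) ∧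
      ∀ G : Subgroup (Heis p n), G ≠ ⊥ → ∀ g : Heis p n, ∃ h ∈ G, g * h ∉ B * B := by
  obtain ⟨X, Y, Z, hcard, hfree⟩ : ∃ (X Y : Fin n → Finset (ZMod p)) (Z : Finset (ZMod p)),
      p ^ (n + 1) ≤ 4 * (2 * n) ^ n * (Heis.brick X Y Z).card ∧
        Heis.CosetFree (Heis.brick X Y Z * Heis.brick X Y Z) := by
    by_cases hpn : p = 3 ∧ n = 1
    · obtain ⟨rfl, rfl⟩ := hpn
      exact ⟨_, _, _, by rw [Heis.card_brick]; decide, Heis.cosetFree_mul_smallBrick⟩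
    obtain ⟨s, w, hs, hw, hsize⟩ := exists_intervalBrick_params (Fact.out : p.Prime).two_le hpn
    refine ⟨_, _, _, ?_, Heis.cosetFree_mul_intervalBrick hs hw⟩
    rwa [← Heis.intervalBrick, Heis.card_intervalBrick (by omega) (by omega)]
  exact ⟨X, Y, Z, _, fun _ => Heis.mem_brick, sqrt_div_mul_rpow_half_le hcard, hfree⟩

theorem stmt15 (n : ℕ) (hn : 1 ≤ n) (p : ℕ) [Fact p.Prime] :
    ∃ (X Y : Fin n → Finset (ZMod p)) (Z : Finset (ZMod p)) (B : Finset (Heis p n)),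
      (∀ g : Heis p n, g ∈ B ↔
        ((∀ i, g.1 i ∈ X i) ∧ (∀ i, g.2.1 i ∈ Y i) ∧ g.2.2 ∈ Z)) ∧
      Real.sqrt p / (4 * (2 * (n : ℝ)) ^ n) * ((p : ℝ) ^ (2 * n + 1)) ^ ((1 : ℝ) / 2)
        ≤ (B.card : ℝ) ∧
      ∀ G : Subgroup (Heis p n), G ≠ ⊥ → ∀ g : Heis p n, ∃ h ∈ G, g * h ∉ B * B :=
  stmt15_general n p
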